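/- Fix a discretization and indices q̂ ∈ {0,…,N_φ−1} and p̂ ∈ {0,…,N_s−1}. Then Σ_{i,j=0}^{N_x−1} ω^pd(x_{ij}·θ_{q̂} − s_{p̂}) ≤ ⌈δ_s/δ_x⌉ · 4√2 / (δ_x·δ_s), where ⌈t⌉ denotes the smallest natural number n with t ≤ n. -/

import Mathlib

open MeasureTheory Real Set Filter
open scoped BigOperators ENNReal Topology

noncomputable section

/-- The spatial domain: the open Euclidean unit ball in the plane. -/
def Omg : Set (ℝ × ℝ) := {x : ℝ × ℝ | x.1 ^ 2 + x.2 ^ 2 < 1}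

/-- The sinogram domain `[0,π) × (−1,1)`. -/
def Sino : Set (ℝ × ℝ) := Ico (0 : ℝ) π ×ˢ Ioo (-1 : ℝ) 1

/-- `κ(φ) = min(1/|cos φ|, 1/|sin φ|)`. -/
def kap (φ : ℝ) : ℝ := min (1 / |cos φ|) (1 / |sin φ|)

/-- `s̄(φ) = (δ_x/2)(|cos φ| + |sin φ|)`. -/
def sbar (dx φ : ℝ) : ℝ := dx / 2 * (|cos φ| + |sin φ|)

/-- `s̲(φ) = (δ_x/2)·||cos φ| − |sin φ||`. -/
def sund (dx φ : ℝ) : ℝ := dx / 2 * |(|cos φ| - |sin φ|)|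

open Classical in
/-- The ray-driven weight function `ω^rd(φ,t)` (for spatial resolution `dx`). -/
def wrd (dx φ t : ℝ) : ℝ :=
  (1 / dx) *
    (if |t| < sund dx φ then kap φ
    else if |t| < sbar dx φ then (sbar dx φ - |t|) / (dx * |cos φ * sin φ|)
    else if (∃ k : ℤ, φ = k * (π / 2)) ∧ |t| = sbar dx φ then 1 / 2
    else 0)

/-- The pixel-driven weight function `ω^pd(t)` (for detector resolution `ds`). -/
def wpd (ds t : ℝ) : ℝ := (1 / ds ^ 2) * max (ds - |t|) 0

/-- The Radon transform, as a pointwise line-integral formula: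
`[Rf](φ,s) = ∫ f(s·θ_φ + t·θ_φ^⊥) dt`. -/
def Radon (f : ℝ × ℝ → ℝ) (φ s : ℝ) : ℝ :=
  ∫ t : ℝ, f (s * cos φ - t * sin φ, s * sin φ + t * cos φ)

/-- The backprojection `[R*g](x) = ∫_0^π g(φ, x·θ_φ) dφ`. -/
def Backproj (g : ℝ × ℝ → ℝ) (x : ℝ × ℝ) : ℝ :=
  ∫ φ in Ico (0 : ℝ) π, g (φ, x.1 * cos φ + x.2 * sin φ)

/-- A discretization: spatial resolution `N_x`, detector resolution `N_s`, and
`N_φ` strictly increasing angles in `[0,π)`. -/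
structure Disc where
  Nx : ℕ
  Nx_pos : 0 < Nx
  Ns : ℕ
  Ns_pos : 0 < Ns
  Nphi : ℕ
  Nphi_pos : 0 < Nphi
  ang : ℕ → ℝ
  ang_mono : ∀ q q', q < q' → q' < Nphi → ang q < ang q'
  ang_mem : ∀ q, q < Nphi → ang q ∈ Ico (0 : ℝ) π

namespace Disc

variable (D : Disc)

/-- Spatial resolution `δ_x = 2/N_x`. -/
def dx : ℝ := 2 / D.Nx

/-- Detector resolution `δ_s = 2/N_s`. -/
def ds : ℝ := 2 / D.Ns

/-- Pixel centers `x_{ij}`. -/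
def xc (i j : ℕ) : ℝ × ℝ := ((i + 1 / 2) * D.dx - 1, (j + 1 / 2) * D.dx - 1)

/-- Spatial pixels `X_{ij}` (closed squares with center `x_{ij}` and side `δ_x`). -/
def Xpix (i j : ℕ) : Set (ℝ × ℝ) :=
  Icc ((D.xc i j).1 - D.dx / 2) ((D.xc i j).1 + D.dx / 2) ×ˢ
    Icc ((D.xc i j).2 - D.dx / 2) ((D.xc i j).2 + D.dx / 2)

/-- Detector pixel centers `s_p`. -/
def sc (p : ℕ) : ℝ := (p + 1 / 2) * D.ds - 1

/-- Detector pixels `S_p`. -/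
def Spix (p : ℕ) : Set ℝ := Ico (D.sc p - D.ds / 2) (D.sc p + D.ds / 2)

/-- Lower endpoint of the angular pixel `Φ_q`. -/
def philow (q : ℕ) : ℝ := if q = 0 then 0 else (D.ang (q - 1) + D.ang q) / 2

/-- Upper endpoint of the angular pixel `Φ_q`. -/
def phihigh (q : ℕ) : ℝ := if q = D.Nphi - 1 then π else (D.ang q + D.ang (q + 1)) / 2

/-- Angular pixels `Φ_q`. -/
def Phipix (q : ℕ) : Set ℝ := Ico (D.philow q) (D.phihigh q)

/-- Angular resolution `δ_φ = max_q |Φ_q|`. -/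
def dphi : ℝ :=
  (Finset.range D.Nphi).sup' (Finset.nonempty_range_iff.mpr D.Nphi_pos.ne')
    fun q => D.phihigh q - D.philow q

/-- The argument `x_{ij}·θ_q − s_p` at which weights are evaluated. -/
def off (i j q p : ℕ) : ℝ :=
  (D.xc i j).1 * cos (D.ang q) + (D.xc i j).2 * sin (D.ang q) - D.sc p

/-- Generic convolutional discretization of the Radon transform with weight `w`. -/
def discRadon (w : ℝ → ℝ → ℝ) (f : ℝ × ℝ → ℝ) (y : ℝ × ℝ) : ℝ :=
  ∑ q ∈ Finset.range D.Nphi, ∑ p ∈ Finset.range D.Ns,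
    Set.indicator (D.Phipix q ×ˢ D.Spix p) (fun _ => (1 : ℝ)) y *
      ∑ i ∈ Finset.range D.Nx, ∑ j ∈ Finset.range D.Nx,
        w (D.ang q) (D.off i j q p) * ∫ x in D.Xpix i j, f x

/-- Generic convolutional discretization of the backprojection with weight `w`. -/
def discBackproj (w : ℝ → ℝ → ℝ) (g : ℝ × ℝ → ℝ) (x : ℝ × ℝ) : ℝ :=
  ∑ i ∈ Finset.range D.Nx, ∑ j ∈ Finset.range D.Nx,
    Set.indicator (D.Xpix i j) (fun _ => (1 : ℝ)) x *
      ∑ q ∈ Finset.range D.Nphi, ∑ p ∈ Finset.range D.Ns,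
        w (D.ang q) (D.off i j q p) * ∫ y in D.Phipix q ×ˢ D.Spix p, g y

end Disc


/-!
Write `tent d t = max (d - |t|) 0`, so that `ω^pd = tent δ_s / δ_s²`. Two points at distance at
least `d` have tent values summing to at most `d`, and at most two points of a `d`-separated set
lie in `(-d, d)`, so the tent values over a `d`-separated set sum to at most `d`.

The offsets `x_{ij}·θ − s` form an affine lattice with steps `δ_x cos φ` and `δ_x sin φ`, one of
which is at least `δ_x / 2` in absolute value. Along that direction every residue class modulo
`m = 2⌈δ_s/δ_x⌉` is `δ_s`-separated, so each of the `N_x` lines contributes at most `m δ_s`.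
-/

def tent (d t : ℝ) : ℝ := max (d - |t|) 0

section Tent

variable {d : ℝ}

theorem tent_nonneg (t : ℝ) : 0 ≤ tent d t := le_max_right _ _

theorem tent_le (hd : 0 ≤ d) (t : ℝ) : tent d t ≤ d :=
  max_le (by linarith [abs_nonneg t]) hd

theorem abs_lt_of_tent_ne_zero {t : ℝ} (h : tent d t ≠ 0) : |t| < d := by
  by_contra! hle
  exact h (max_eq_right (by linarith))

theorem tent_add_tent_le (hd : 0 ≤ d) {u v : ℝ} (huv : d ≤ |u - v|) :
    tent d u + tent d v ≤ d := by
  have htri : |u - v| ≤ |u| + |v| := abs_sub _ _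
  unfold tent
  rcases le_total (d - |u|) 0 with hu | hu <;> rcases le_total (d - |v|) 0 with hv | hv <;>
    simp only [max_eq_left, max_eq_right, hu, hv] <;> linarith [abs_nonneg u, abs_nonneg v]

theorem sum_tent_le_of_separated (hd : 0 ≤ d) {ι : Type*} (s : Finset ι) (g : ι → ℝ)
    (hsep : ∀ a ∈ s, ∀ b ∈ s, a ≠ b → d ≤ |g a - g b|) :
    ∑ i ∈ s, tent d (g i) ≤ d := by
  classical
  set s' := s.filter fun i => |g i| < d
  have hs' : ∑ i ∈ s', tent d (g i) = ∑ i ∈ s, tent d (g i) :=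
    Finset.sum_filter_of_ne fun i _ h => abs_lt_of_tent_ne_zero h
  have hs's : s' ⊆ s := Finset.filter_subset _ _
  rcases s'.eq_empty_or_nonempty with hempty | hne
  · simp only [← hs', hempty, Finset.sum_empty, hd]
  obtain ⟨a, ha, hmin⟩ := s'.exists_min_image g hne
  obtain ⟨b, hb, hmax⟩ := s'.exists_max_image g hne
  have hsub : s' ⊆ {a, b} := by
    intro k hk
    by_contra hkab
    simp only [Finset.mem_insert, Finset.mem_singleton, not_or] at hkab
    have hka := hsep k (hs's hk) a (hs's ha) hkab.1
    have hbk := hsep b (hs's hb) k (hs's hk) (Ne.symm hkab.2)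
    rw [abs_of_nonneg (sub_nonneg.2 (hmin k hk))] at hka
    rw [abs_of_nonneg (sub_nonneg.2 (hmax k hk))] at hbk
    have hga := abs_lt.1 (Finset.mem_filter.1 ha).2
    have hgb := abs_lt.1 (Finset.mem_filter.1 hb).2
    linarith
  calc ∑ i ∈ s, tent d (g i) = ∑ i ∈ s', tent d (g i) := hs'.symm
    _ ≤ ∑ i ∈ {a, b}, tent d (g i) :=
      Finset.sum_le_sum_of_subset_of_nonneg hsub fun _ _ _ => tent_nonneg _
    _ ≤ d := by
      rcases eq_or_ne a b with rfl | hab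
      · simpa using tent_le hd (g a)
      · rw [Finset.sum_pair hab]
        exact tent_add_tent_le hd (hsep a (hs's ha) b (hs's hb) hab)

/-- Indices in one residue class modulo `m` are `m` apart, hence their points `m |h| ≥ d`. -/
theorem sum_range_tent_arith_le (hd : 0 ≤ d) (t₀ h : ℝ) (n : ℕ) {m : ℕ} (hm : 0 < m)
    (hmh : d ≤ m * |h|) :
    ∑ j ∈ Finset.range n, tent d (t₀ + j * h) ≤ m * d := by
  rw [← Finset.sum_fiberwise_of_maps_to (g := (· % m)) (t := Finset.range m)
    fun j _ => Finset.mem_range.2 (Nat.mod_lt j hm)]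
  calc _ ≤ ∑ _r ∈ Finset.range m, d :=
        Finset.sum_le_sum fun r _ => sum_tent_le_of_separated hd _ _ ?_
    _ = m * d := by simp
  intro a ha b hb hab
  have hmod : a ≡ b [MOD m] := (Finset.mem_filter.1 ha).2.trans (Finset.mem_filter.1 hb).2.symm
  have hdist : (m : ℝ) ≤ |(a : ℝ) - b| := by
    have : (m : ℤ) ≤ |(b : ℤ) - a| := not_lt.1 fun hlt => hab (hmod.eq_of_abs_lt hlt)
    rw [abs_sub_comm]
    exact_mod_cast this
  calc d ≤ m * |h| := hmh
    _ ≤ |(a : ℝ) - b| * |h| := mul_le_mul_of_nonneg_right hdist (abs_nonneg h)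
    _ = |(t₀ + a * h) - (t₀ + b * h)| := by rw [← abs_mul]; ring_nf

theorem sum_sum_tent_affine_le (hd : 0 ≤ d) (a h₁ h₂ : ℝ) (n : ℕ) {m : ℕ} (hm : 0 < m)
    (hstep : d ≤ m * |h₁| ∨ d ≤ m * |h₂|) :
    ∑ i ∈ Finset.range n, ∑ j ∈ Finset.range n, tent d (a + i * h₁ + j * h₂) ≤ n * (m * d) := by
  rcases hstep with h | h
  · rw [Finset.sum_comm]
    simp only [add_right_comm a]
    simpa using Finset.sum_le_sum fun j (_ : j ∈ Finset.range n) =>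
      sum_range_tent_arith_le hd (a + j * h₂) h₁ n hm h
  · simpa using Finset.sum_le_sum fun i (_ : i ∈ Finset.range n) =>
      sum_range_tent_arith_le hd (a + i * h₁) h₂ n hm h

end Tent

theorem half_le_abs_cos_or_half_le_abs_sin (φ : ℝ) : 1 / 2 ≤ |cos φ| ∨ 1 / 2 ≤ |sin φ| := by
  by_contra! h
  nlinarith [sin_sq_add_cos_sq φ, sq_abs (cos φ), sq_abs (sin φ), abs_nonneg (cos φ),
    abs_nonneg (sin φ)]

namespace Disc

variable (D : Disc)

theorem dx_pos : 0 < D.dx := div_pos two_pos (Nat.cast_pos.2 D.Nx_pos)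

theorem ds_pos : 0 < D.ds := div_pos two_pos (Nat.cast_pos.2 D.Ns_pos)

theorem Nx_eq : (D.Nx : ℝ) = 2 / D.dx := by
  rw [dx, div_div_cancel₀ two_ne_zero]

theorem off_eq (i j q p : ℕ) :
    D.off i j q p = D.off 0 0 q p + i * (D.dx * cos (D.ang q)) + j * (D.dx * sin (D.ang q)) := by
  simp only [off, xc, Nat.cast_zero]
  ring

end Disc

theorem pixelWeight_space_sum_general (D : Disc) (qh ph : ℕ) :
    ∑ i ∈ Finset.range D.Nx, ∑ j ∈ Finset.range D.Nx, wpd D.ds (D.off i j qh ph)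
      ≤ (⌈D.ds / D.dx⌉₊ : ℝ) * (4 * Real.sqrt 2 / (D.dx * D.ds)) := by
  set M := ⌈D.ds / D.dx⌉₊
  have hM : 0 < M := Nat.ceil_pos.2 (div_pos D.ds_pos D.dx_pos)
  have hds : D.ds ≤ M * D.dx := (div_le_iff₀ D.dx_pos).1 (Nat.le_ceil _)
  have hstep : ∀ c : ℝ, 1 / 2 ≤ |c| → D.ds ≤ ((2 * M : ℕ) : ℝ) * |D.dx * c| := fun c hc => by
    have hMdx : (0 : ℝ) ≤ 2 * M * D.dx := mul_nonneg (by positivity) D.dx_pos.le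
    rw [abs_mul, abs_of_pos D.dx_pos]
    push_cast
    nlinarith [mul_le_mul_of_nonneg_left hc hMdx]
  have hsum := sum_sum_tent_affine_le D.ds_pos.le (D.off 0 0 qh ph) _ _ D.Nx (by omega)
    ((half_le_abs_cos_or_half_le_abs_sin (D.ang qh)).imp (hstep _) (hstep _))
  have hsqrt : (1 : ℝ) ≤ Real.sqrt 2 := Real.one_le_sqrt.2 one_le_two
  calc ∑ i ∈ Finset.range D.Nx, ∑ j ∈ Finset.range D.Nx, wpd D.ds (D.off i j qh ph)
      = 1 / D.ds ^ 2 * ∑ i ∈ Finset.range D.Nx, ∑ j ∈ Finset.range D.Nx,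
          tent D.ds (D.off 0 0 qh ph + i * (D.dx * cos (D.ang qh)) +
            j * (D.dx * sin (D.ang qh))) := by
        simp only [Finset.mul_sum, ← D.off_eq]
        rfl
    _ ≤ 1 / D.ds ^ 2 * (D.Nx * ((2 * M : ℕ) * D.ds)) :=
        mul_le_mul_of_nonneg_left hsum (by positivity)
    _ = M * (4 / (D.dx * D.ds)) := by
        rw [D.Nx_eq]
        field_simp
        push_cast
        ring
    _ ≤ M * (4 * Real.sqrt 2 / (D.dx * D.ds)) := by
        gcongr
        · exact (mul_pos D.dx_pos D.ds_pos).le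
        · linarith

/-- the sum of pixel-driven weights over all spatial pixels is at most
`⌈δ_s/δ_x⌉·4√2/(δ_x δ_s)`. -/
theorem pixelWeight_space_sum (D : Disc) (qh ph : ℕ) (hq : qh < D.Nphi) (hp : ph < D.Ns) :
    ∑ i ∈ Finset.range D.Nx, ∑ j ∈ Finset.range D.Nx, wpd D.ds (D.off i j qh ph)
      ≤ (⌈D.ds / D.dx⌉₊ : ℝ) * (4 * Real.sqrt 2 / (D.dx * D.ds)) :=
  pixelWeight_space_sum_general D qh ph
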